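/- Let F(Y) = kY + W·X(Y) + I₀' where X(Y)_i = 1/(1+e^{−y_i/ε}) and W = ω·W₀ with W₀ → identity as |ω| → ∞ (off-diagonal entries fixed, diagonal equal to ω). For any bounded set B ⊂ ℝⁿ, there exists c > 0 such that for all |ω| > c and all Y ∈ B, every eigenvalue λ of the Jacobian F_Y(Y) = k·I + (1/ε)·W·Z(Y), where Z(Y) = diag(x_i(1−x_i)), satisfies |λ| > 1. -/

import Mathlib

/-!
On a bounded set `‖Y‖ ≤ R` every gain `zᵢ = xᵢ(1 - xᵢ)` lies in `[σ(-R/ε)², 1]`, since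
`1 - σ(u) = σ(-u)`. Hence in each row of the Jacobian the diagonal entry `k + ε⁻¹ ω zᵢ` has
modulus at least `ε⁻¹ |ω| σ(-R/ε)² - |k|`, while the off-diagonal entries `ε⁻¹ ω'ᵢⱼ zⱼ` have
absolute sum at most `ε⁻¹ ∑ |ω'ᵢⱼ|`, independently of `ω`. For `|ω|` large every Gershgorin disc
therefore lies outside the closed unit disc, and so does every eigenvalue.
-/

noncomputable def sigmoid (u : ℝ) : ℝ := 1 / (1 + Real.exp (-u))

/-- Weight matrix with all diagonal entries equal to `ω` and fixed off-diagonal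
entries `ω'`. -/
noncomputable def weightMat {n : ℕ} (ω' : Fin n → Fin n → ℝ) (ω : ℝ) :
    Matrix (Fin n) (Fin n) ℝ :=
  fun i j => if i = j then ω else ω' i j

/-- Jacobian `k·I + (1/ε)·W·Z(Y)` with `Z(Y) = diag(xᵢ(1-xᵢ))`, `xᵢ = σ(yᵢ/ε)`. -/
noncomputable def tcnnJacobian {n : ℕ} (ω' : Fin n → Fin n → ℝ) (ω k ε : ℝ)
    (Y : Fin n → ℝ) : Matrix (Fin n) (Fin n) ℝ :=
  k • (1 : Matrix (Fin n) (Fin n) ℝ) +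
    ε⁻¹ • (weightMat ω' ω *
      Matrix.diagonal (fun i => sigmoid (Y i / ε) * (1 - sigmoid (Y i / ε))))

open Finset Matrix

lemma sigmoid_eq_real_sigmoid : sigmoid = Real.sigmoid :=
  funext fun _ => one_div _

namespace Real

lemma sigmoid_mul_one_sub_le_one (u : ℝ) : sigmoid u * (1 - sigmoid u) ≤ 1 :=
  mul_le_one₀ (sigmoid_le_one u) (sub_nonneg.mpr (sigmoid_le_one u))
    (sub_le_self _ (sigmoid_nonneg u))

lemma sigmoid_neg_sq_le_sigmoid_mul_one_sub {u r : ℝ} (hu : |u| ≤ r) :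
    sigmoid (-r) ^ 2 ≤ sigmoid u * (1 - sigmoid u) := by
  rw [sq, ← sigmoid_neg]
  have ⟨hru, hur⟩ := abs_le.mp hu
  exact mul_le_mul (sigmoid_le hru) (sigmoid_le (by linarith)) (sigmoid_nonneg _)
    (sigmoid_nonneg _)

end Real

theorem Matrix.lt_norm_of_isRoot_charpoly {K ι : Type*} [NormedField K] [Fintype ι]
    [DecidableEq ι] {A : Matrix ι ι K} {r : ℝ} {μ : K}
    (hA : ∀ i, r + ∑ j ∈ univ.erase i, ‖A i j‖ < ‖A i i‖) (hμ : A.charpoly.IsRoot μ) :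
    r < ‖μ‖ := by
  have hμ' : Module.End.HasEigenvalue (toLin' A) μ := by
    rwa [Module.End.hasEigenvalue_iff_isRoot_charpoly, charpoly_toLin']
  obtain ⟨i, hi⟩ := eigenvalue_mem_ball hμ'
  rw [mem_closedBall_iff_norm'] at hi
  linarith [hA i, norm_sub_norm_le (A i i) μ]

section RowDominance

variable {n : ℕ} {ω' : Fin n → Fin n → ℝ} {ω k ε δ S : ℝ} {d : Fin n → ℝ}

lemma smul_one_add_smul_weightMat_mul_diagonal_apply_self (i : Fin n) :
    (k • 1 + ε⁻¹ • (weightMat ω' ω * diagonal d)) i i = k + ε⁻¹ * (ω * d i) := by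
  simp [weightMat, mul_diagonal]

lemma smul_one_add_smul_weightMat_mul_diagonal_apply_of_ne {i j : Fin n} (hij : i ≠ j) :
    (k • 1 + ε⁻¹ • (weightMat ω' ω * diagonal d)) i j = ε⁻¹ * (ω' i j * d j) := by
  simp [weightMat, mul_diagonal, hij]

lemma smul_one_add_smul_weightMat_mul_diagonal_row_dominant (hε : 0 < ε) (hδ : 0 < δ)
    (hd : ∀ i, δ ≤ d i ∧ d i ≤ 1) (hS : ∀ i, ∑ j ∈ univ.erase i, |ω' i j| ≤ S) {r : ℝ}
    (hω : (ε * (r + |k|) + S) / δ < |ω|) (i : Fin n) :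
    r + ∑ j ∈ univ.erase i, |(k • 1 + ε⁻¹ • (weightMat ω' ω * diagonal d)) i j| <
      |(k • 1 + ε⁻¹ • (weightMat ω' ω * diagonal d)) i i| := by
  rw [smul_one_add_smul_weightMat_mul_diagonal_apply_self,
    sum_congr rfl fun j hj => by
      rw [smul_one_add_smul_weightMat_mul_diagonal_apply_of_ne (ne_of_mem_erase hj).symm]]
  have hoff : ∑ j ∈ univ.erase i, |ε⁻¹ * (ω' i j * d j)| ≤ ε⁻¹ * S := by
    calc _ ≤ ∑ j ∈ univ.erase i, ε⁻¹ * |ω' i j| := by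
          refine sum_le_sum fun j _ => ?_
          rw [abs_mul, abs_mul, abs_inv, abs_of_pos hε, abs_of_pos (hδ.trans_le (hd j).1)]
          gcongr
          exact mul_le_of_le_one_right (abs_nonneg _) (hd j).2
      _ ≤ ε⁻¹ * S := by rw [← mul_sum]; gcongr; exact hS i
  have hdiag : ε⁻¹ * (|ω| * δ) ≤ |ε⁻¹ * (ω * d i)| := by
    rw [abs_mul, abs_mul, abs_inv, abs_of_pos hε, abs_of_pos (hδ.trans_le (hd i).1)]
    gcongr
    exact (hd i).1
  have hω' : r + ε⁻¹ * S < ε⁻¹ * (|ω| * δ) - |k| := by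
    rw [div_lt_iff₀ hδ] at hω
    have := mul_lt_mul_of_pos_left hω (inv_pos.mpr hε)
    field_simp at this ⊢
    linarith
  linarith [abs_add' (ε⁻¹ * (ω * d i)) k, abs_neg k]

end RowDominance

theorem stmt_12 {n : ℕ} (ω' : Fin n → Fin n → ℝ) (k ε : ℝ) (hε : 0 < ε)
    (B : Set (Fin n → ℝ)) (hB : Bornology.IsBounded B) :
    ∃ c > (0:ℝ), ∀ ω : ℝ, c < |ω| → ∀ Y ∈ B, ∀ lam : ℂ,
      (((tcnnJacobian ω' ω k ε Y).map (algebraMap ℝ ℂ)).charpoly).IsRoot lam →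
        1 < ‖lam‖ := by
  obtain ⟨R, hR⟩ := isBounded_iff_forall_norm_le.mp hB
  set δ := Real.sigmoid (-(R / ε)) ^ 2
  have hδ : 0 < δ := pow_pos (Real.sigmoid_pos _) 2
  set S := ∑ i, ∑ j, |ω' i j|
  have hS : ∀ i, ∑ j ∈ univ.erase i, |ω' i j| ≤ S := fun i =>
    (sum_le_sum_of_subset_of_nonneg (erase_subset i univ) fun j _ _ => abs_nonneg _).trans
      (single_le_sum (f := fun i => ∑ j, |ω' i j|)
        (fun i _ => sum_nonneg fun j _ => abs_nonneg _) (mem_univ i))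
  refine ⟨(ε * (1 + |k|) + S) / δ, by positivity, fun ω hω Y hY lam hlam => ?_⟩
  have hd : ∀ i, δ ≤ sigmoid (Y i / ε) * (1 - sigmoid (Y i / ε)) ∧
      sigmoid (Y i / ε) * (1 - sigmoid (Y i / ε)) ≤ 1 := fun i => by
    rw [sigmoid_eq_real_sigmoid]
    refine ⟨Real.sigmoid_neg_sq_le_sigmoid_mul_one_sub ?_, Real.sigmoid_mul_one_sub_le_one _⟩
    rw [abs_div, abs_of_pos hε]
    gcongr
    exact (norm_le_pi_norm Y i).trans (hR Y hY)
  refine lt_norm_of_isRoot_charpoly (fun i => ?_) hlam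
  simp only [map_apply, Complex.coe_algebraMap, Complex.norm_real, Real.norm_eq_abs]
  exact smul_one_add_smul_weightMat_mul_diagonal_row_dominant hε hδ hd hS hω i
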